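/- arXiv:2206.06409 — 3 statements merged into one kernel-verified Lean document; each statement's English description precedes it below -/
import Mathlib

section
/- For unitary matrices U and V on a finite-dimensional Hilbert space, the induced channels satisfy: for every density matrix ρ (extended with an ancilla identity), ‖(U⊗I)ρ(U⊗I)† − (V⊗I)ρ(V⊗I)†‖_1 ≤ 2‖U − V‖_∞, i.e., the diamond distance between the unitary channels ρ ↦ UρU† and ρ ↦ VρV† is at most twice the spectral norm distance ‖U − V‖_∞. -/
open Matrix
open scoped Kronecker ComplexOrder

/-- The trace norm (sum of singular values) of a square complex matrix. -/
noncomputable def traceNorm {n : Type*} [Fintype n] [DecidableEq n] (A : Matrix n n ℂ) : ℝ :=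
  ∑ i, Real.sqrt ((Matrix.isHermitian_conjTranspose_mul_self A).eigenvalues i)

/-- The spectral (operator) norm of a square complex matrix. -/
noncomputable def matrixSpectralNorm {n : Type*} [Fintype n] [DecidableEq n] (A : Matrix n n ℂ) : ℝ :=
  ‖Matrix.toEuclideanCLM (𝕜 := ℂ) A‖

namespace DiamondAux

local notation "⟪" x ", " y "⟫" => @inner ℂ _ _ x y

set_option linter.unusedSectionVars false

variable {n : Type*} [Fintype n] [DecidableEq n]

noncomputable def clm (A : Matrix n n ℂ) : EuclideanSpace ℂ n →L[ℂ] EuclideanSpace ℂ n :=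
  Matrix.toEuclideanCLM (𝕜 := ℂ) A

lemma clm_apply (A : Matrix n n ℂ) (x : EuclideanSpace ℂ n) (i : n) :
    (clm A x) i = A.mulVec x i := rfl

lemma clm_conjTranspose (A : Matrix n n ℂ) :
    clm Aᴴ = ContinuousLinearMap.adjoint (clm A) := by
  rw [← ContinuousLinearMap.star_eq_adjoint]
  show Matrix.toEuclideanCLM (𝕜 := ℂ) (star A) = star (Matrix.toEuclideanCLM (𝕜 := ℂ) A)
  exact map_star _ _

lemma inner_clm_conjTranspose_left (A : Matrix n n ℂ) (x y : EuclideanSpace ℂ n) :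
    ⟪clm Aᴴ x, y⟫ = ⟪x, clm A y⟫ := by
  rw [clm_conjTranspose]; exact ContinuousLinearMap.adjoint_inner_left _ _ _

lemma inner_clm_conjTranspose_right (A : Matrix n n ℂ) (x y : EuclideanSpace ℂ n) :
    ⟪x, clm Aᴴ y⟫ = ⟪clm A x, y⟫ := by
  rw [clm_conjTranspose]; exact ContinuousLinearMap.adjoint_inner_right _ _ _

lemma clm_mul (A B : Matrix n n ℂ) (x : EuclideanSpace ℂ n) :
    clm (A * B) x = clm A (clm B x) := by
  show (Matrix.toEuclideanCLM (𝕜 := ℂ) (A * B)) x = _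
  rw [_root_.map_mul]; rfl

lemma norm_sq' (x : EuclideanSpace ℂ n) : ‖x‖ ^ 2 = ∑ i, ‖x i‖ ^ 2 := by
  rw [EuclideanSpace.norm_eq, Real.sq_sqrt]
  positivity

lemma inner_self_complex (x : EuclideanSpace ℂ n) : ⟪x, x⟫ = ((‖x‖ ^ 2 : ℝ) : ℂ) := by
  rw [@inner_self_eq_norm_sq_to_K ℂ]; push_cast; rfl

lemma inner_clm_self (A : Matrix n n ℂ) (x y : EuclideanSpace ℂ n) :
    ⟪clm A x, clm A y⟫ = ⟪x, clm (Aᴴ * A) y⟫ := by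
  rw [clm_mul, inner_clm_conjTranspose_right]


/-- Generalized Bessel: pairwise-orthogonal family with norms at most 1. -/
lemma bessel' {ι : Type*} [Fintype ι] {w : ι → EuclideanSpace ℂ n}
    (hw : ∀ i j, i ≠ j → ⟪w i, w j⟫ = 0) (hw1 : ∀ i, ‖w i‖ ≤ 1)
    (x : EuclideanSpace ℂ n) :
    ∑ i, ‖⟪w i, x⟫‖ ^ 2 ≤ ‖x‖ ^ 2 := by
  classical
  set g : {i // w i ≠ 0} → EuclideanSpace ℂ n := fun i => (‖w i.1‖ : ℂ)⁻¹ • w i.1 with hg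
  have horth : Orthonormal ℂ g := by
    constructor
    · rintro ⟨i, hi⟩
      have h0 : ‖w i‖ ≠ 0 := norm_ne_zero_iff.mpr hi
      simp only [hg, norm_smul, norm_inv, Complex.norm_real, Real.norm_eq_abs,
        abs_of_nonneg (norm_nonneg _)]
      field_simp
    · rintro ⟨i, hi⟩ ⟨j, hj⟩ hne
      have hij : i ≠ j := by simpa [Subtype.ext_iff] using hne
      simp only [hg, inner_smul_left, inner_smul_right, hw i j hij, mul_zero]
  have hb := horth.sum_inner_products_le (𝕜 := ℂ) (s := Finset.univ) x
  have hterm : ∀ i : {i // w i ≠ 0}, ‖⟪w i.1, x⟫‖ ^ 2 ≤ ‖⟪g i, x⟫‖ ^ 2 := by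
    rintro ⟨i, hi⟩
    have h0 : (0:ℝ) < ‖w i‖ := norm_pos_iff.mpr hi
    have : ⟪g ⟨i, hi⟩, x⟫ = ((‖w i‖ : ℂ))⁻¹ * ⟪w i, x⟫ := by
      simp [hg, inner_smul_left, map_inv₀, Complex.conj_ofReal]
      ring
    rw [this]
    have : ‖((‖w i‖ : ℂ))⁻¹ * ⟪w i, x⟫‖ = ‖w i‖⁻¹ * ‖⟪w i, x⟫‖ := by
      simp [norm_inv]
    rw [this, mul_pow]
    have h1 : (1:ℝ) ≤ ‖w i‖⁻¹ := (one_le_inv₀ h0).mpr (hw1 i)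
    have h2 : (1:ℝ) ≤ ‖w i‖⁻¹ ^ 2 := by nlinarith
    nlinarith [mul_le_mul_of_nonneg_right h2 (sq_nonneg ‖⟪w i, x⟫‖)]
  calc ∑ i, ‖⟪w i, x⟫‖ ^ 2
      = ∑ i ∈ Finset.univ.filter (fun i => w i ≠ 0), ‖⟪w i, x⟫‖ ^ 2 := by
        refine (Finset.sum_filter_of_ne ?_).symm
        intro i _ h
        by_contra h0
        simp [h0] at h
    _ = ∑ i : {i // w i ≠ 0}, ‖⟪w i.1, x⟫‖ ^ 2 := by
        rw [← Finset.sum_subtype (Finset.univ.filter (fun i => w i ≠ 0))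
          (fun i => by simp) (fun i => ‖⟪w i, x⟫‖ ^ 2)]
    _ ≤ ∑ i : {i // w i ≠ 0}, ‖⟪g i, x⟫‖ ^ 2 := Finset.sum_le_sum fun i _ => hterm i
    _ ≤ ‖x‖ ^ 2 := hb

/-- Squared Frobenius norm. -/
noncomputable def frobSq (M : Matrix n n ℂ) : ℝ := ∑ j, ∑ i, ‖M i j‖ ^ 2

lemma frobSq_nonneg (M : Matrix n n ℂ) : 0 ≤ frobSq M := by
  unfold frobSq; positivity

lemma norm_clm_single_sq (M : Matrix n n ℂ) (j : n) :
    ‖clm M (EuclideanSpace.single j (1:ℂ))‖ ^ 2 = ∑ i, ‖M i j‖ ^ 2 := by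
  rw [norm_sq']
  refine Finset.sum_congr rfl fun i _ => ?_
  congr 1
  rw [clm_apply]
  simp [Matrix.mulVec, dotProduct, EuclideanSpace.single_apply]

lemma frobSq_eq (M : Matrix n n ℂ) :
    frobSq M = ∑ j, ‖clm M (EuclideanSpace.single j (1:ℂ))‖ ^ 2 := by
  unfold frobSq
  exact Finset.sum_congr rfl fun j _ => (norm_clm_single_sq M j).symm

lemma sum_sq_clm_conjTranspose_le {ι : Type*} [Fintype ι] {w : ι → EuclideanSpace ℂ n}
    (hw : ∀ i j, i ≠ j → ⟪w i, w j⟫ = 0) (hw1 : ∀ i, ‖w i‖ ≤ 1) (M : Matrix n n ℂ) :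
    ∑ i, ‖clm Mᴴ (w i)‖ ^ 2 ≤ frobSq M := by
  have key : ∀ i, ‖clm Mᴴ (w i)‖ ^ 2
      = ∑ j, ‖⟪w i, clm M (EuclideanSpace.single j (1:ℂ))⟫‖ ^ 2 := by
    intro i
    rw [norm_sq']
    refine Finset.sum_congr rfl fun j _ => ?_
    have h1 : (clm Mᴴ (w i)) j = ⟪EuclideanSpace.single j (1:ℂ), clm Mᴴ (w i)⟫ := by
      rw [EuclideanSpace.inner_single_left]; simp
    have h2 : ⟪EuclideanSpace.single j (1:ℂ), clm Mᴴ (w i)⟫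
        = ⟪clm M (EuclideanSpace.single j (1:ℂ)), w i⟫ :=
      inner_clm_conjTranspose_right M _ _
    rw [h1, h2, ← inner_conj_symm, RCLike.norm_conj]
  calc ∑ i, ‖clm Mᴴ (w i)‖ ^ 2
      = ∑ i, ∑ j, ‖⟪w i, clm M (EuclideanSpace.single j (1:ℂ))⟫‖ ^ 2 :=
        Finset.sum_congr rfl fun i _ => key i
    _ = ∑ j, ∑ i, ‖⟪w i, clm M (EuclideanSpace.single j (1:ℂ))⟫‖ ^ 2 := Finset.sum_comm
    _ ≤ ∑ j, ‖clm M (EuclideanSpace.single j (1:ℂ))‖ ^ 2 :=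
        Finset.sum_le_sum fun j _ => bessel' hw hw1 _
    _ = frobSq M := (frobSq_eq M).symm


section Eigen

variable (A : Matrix n n ℂ)

lemma clm_herm_eig' (M : Matrix n n ℂ) (hM : M.IsHermitian) (i : n) :
    clm M (hM.eigenvectorBasis i)
      = ((hM.eigenvalues i : ℝ) : ℂ) • hM.eigenvectorBasis i := by
  have hmv := hM.mulVec_eigenvectorBasis i
  ext j
  have key : (clm M (hM.eigenvectorBasis i)) j
      = hM.eigenvalues i • ((hM.eigenvectorBasis i : EuclideanSpace ℂ n) j) := congrFun hmv j
  rw [key]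
  simp [Complex.real_smul]

lemma inner_clm_eig_self (i : n) :
    ⟪clm A ((Matrix.isHermitian_conjTranspose_mul_self A).eigenvectorBasis i),
      clm A ((Matrix.isHermitian_conjTranspose_mul_self A).eigenvectorBasis i)⟫
      = (((Matrix.isHermitian_conjTranspose_mul_self A).eigenvalues i : ℝ) : ℂ) := by
  rw [inner_clm_self, clm_herm_eig', inner_smul_right]
  have : ⟪((Matrix.isHermitian_conjTranspose_mul_self A).eigenvectorBasis i : EuclideanSpace ℂ n),
      (Matrix.isHermitian_conjTranspose_mul_self A).eigenvectorBasis i⟫ = 1 := by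
    rw [inner_self_complex]
    simp [(Matrix.isHermitian_conjTranspose_mul_self A).eigenvectorBasis.orthonormal.1 i]
  rw [this, mul_one]

lemma norm_clm_eig_sq (i : n) :
    ‖clm A ((Matrix.isHermitian_conjTranspose_mul_self A).eigenvectorBasis i)‖ ^ 2
      = (Matrix.isHermitian_conjTranspose_mul_self A).eigenvalues i := by
  have h1 := inner_clm_eig_self A i
  rw [inner_self_complex] at h1
  exact_mod_cast h1

lemma traceNorm_eq_sum :
    traceNorm A = ∑ i, ‖clm A ((Matrix.isHermitian_conjTranspose_mul_self A).eigenvectorBasis i)‖ := by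
  unfold traceNorm
  refine Finset.sum_congr rfl fun i _ => ?_
  rw [← norm_clm_eig_sq A i, Real.sqrt_sq (norm_nonneg _)]

end Eigen

/-- The master inequality: if `X = P₁ Q₁ᴴ + P₂ Q₂ᴴ` then
`‖X‖₁ ≤ ‖P₁‖_F ‖Q₁‖_F + ‖P₂‖_F ‖Q₂‖_F`. -/
lemma traceNorm_le_of_eq (X P₁ Q₁ P₂ Q₂ : Matrix n n ℂ)
    (hX : X = P₁ * Q₁ᴴ + P₂ * Q₂ᴴ) :
    traceNorm X ≤ Real.sqrt (frobSq P₁) * Real.sqrt (frobSq Q₁)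
      + Real.sqrt (frobSq P₂) * Real.sqrt (frobSq Q₂) := by
  classical
  set b : OrthonormalBasis n ℂ (EuclideanSpace ℂ n) :=
    (Matrix.isHermitian_conjTranspose_mul_self X).eigenvectorBasis with hb
  set σ : n → ℝ := fun i => ‖clm X (b i)‖ with hσ
  have hσi : ∀ i, σ i = ‖clm X (b i)‖ := fun i => by rw [hσ]
  set w : n → EuclideanSpace ℂ n := fun i => ((σ i : ℝ) : ℂ)⁻¹ • clm X (b i) with hwdef
  have hwi : ∀ i, w i = ((σ i : ℝ) : ℂ)⁻¹ • clm X (b i) := fun i => by rw [hwdef]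
  have hbo : ∀ i j, i ≠ j → ⟪(b i : EuclideanSpace ℂ n), b j⟫ = 0 :=
    fun i j hij => b.orthonormal.2 hij
  have hb1 : ∀ i, ‖(b i : EuclideanSpace ℂ n)‖ ≤ 1 := fun i => le_of_eq (b.orthonormal.1 i)
  have himg : ∀ i j, i ≠ j → ⟪clm X (b i), clm X (b j)⟫ = 0 := by
    intro i j hij
    rw [inner_clm_self, hb, clm_herm_eig', inner_smul_right]
    rw [(Matrix.isHermitian_conjTranspose_mul_self X).eigenvectorBasis.orthonormal.2 hij, mul_zero]
  have hworth : ∀ i j, i ≠ j → ⟪w i, w j⟫ = 0 := by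
    intro i j hij
    rw [hwi i, hwi j]
    simp only [inner_smul_left, inner_smul_right, himg i j hij, mul_zero]
  have hw1 : ∀ i, ‖w i‖ ≤ 1 := by
    intro i
    rcases eq_or_ne (σ i) 0 with h0 | h0
    · have hz : clm X (b i) = 0 := norm_eq_zero.mp ((hσi i).symm.trans h0)
      rw [hwi i, hz, smul_zero]
      simp
    · have hpos : 0 < σ i := lt_of_le_of_ne ((hσi i).symm ▸ norm_nonneg _) (Ne.symm h0)
      rw [hwi i, norm_smul, ← hσi i]
      simp only [norm_inv, Complex.norm_real, Real.norm_eq_abs, abs_of_pos hpos]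
      rw [inv_mul_cancel₀ h0]
  have hkey : ∀ i, σ i = Complex.re ⟪w i, clm X (b i)⟫ := by
    intro i
    rcases eq_or_ne (σ i) 0 with h0 | h0
    · have hz : clm X (b i) = 0 := norm_eq_zero.mp ((hσi i).symm.trans h0)
      rw [h0, hz]
      simp
    · have hinner : ⟪w i, clm X (b i)⟫ = (((σ i)⁻¹ * (σ i) ^ 2 : ℝ) : ℂ) := by
        rw [hwi i]
        rw [inner_smul_left, map_inv₀, Complex.conj_ofReal]
        rw [inner_self_complex, ← hσi i]
        push_cast
        ring
      rw [hinner]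
      simp only [Complex.ofReal_re]
      field_simp
  have hdecomp : ∀ i, clm X (b i) = clm P₁ (clm Q₁ᴴ (b i)) + clm P₂ (clm Q₂ᴴ (b i)) := by
    intro i
    rw [hX]
    show (Matrix.toEuclideanCLM (𝕜 := ℂ) (P₁ * Q₁ᴴ + P₂ * Q₂ᴴ)) (b i) = _
    rw [map_add, ContinuousLinearMap.add_apply]
    show clm (P₁ * Q₁ᴴ) (b i) + clm (P₂ * Q₂ᴴ) (b i) = _
    rw [clm_mul, clm_mul]
  have habs : ∀ (u v : EuclideanSpace ℂ n), Complex.re ⟪u, v⟫ ≤ ‖u‖ * ‖v‖ := by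
    intro u v
    calc Complex.re ⟪u, v⟫ ≤ ‖⟪u, v⟫‖ := Complex.re_le_norm _
      _ ≤ ‖u‖ * ‖v‖ := norm_inner_le_norm _ _
  have hterm : ∀ i, σ i ≤ ‖clm P₁ᴴ (w i)‖ * ‖clm Q₁ᴴ (b i)‖
      + ‖clm P₂ᴴ (w i)‖ * ‖clm Q₂ᴴ (b i)‖ := by
    intro i
    rw [hkey i, hdecomp i, inner_add_right, Complex.add_re]
    have e1 : ⟪w i, clm P₁ (clm Q₁ᴴ (b i))⟫ = ⟪clm P₁ᴴ (w i), clm Q₁ᴴ (b i)⟫ :=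
      (inner_clm_conjTranspose_left P₁ _ _).symm
    have e2 : ⟪w i, clm P₂ (clm Q₂ᴴ (b i))⟫ = ⟪clm P₂ᴴ (w i), clm Q₂ᴴ (b i)⟫ :=
      (inner_clm_conjTranspose_left P₂ _ _).symm
    rw [e1, e2]
    exact add_le_add (habs _ _) (habs _ _)
  have CS : ∀ (P Q : Matrix n n ℂ) (v : n → EuclideanSpace ℂ n),
      (∀ i j, i ≠ j → ⟪v i, v j⟫ = 0) → (∀ i, ‖v i‖ ≤ 1) →
      ∑ i, ‖clm Pᴴ (v i)‖ * ‖clm Qᴴ (b i)‖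
        ≤ Real.sqrt (frobSq P) * Real.sqrt (frobSq Q) := by
    intro P Q v hvo hv1
    have h1 : (∑ i, ‖clm Pᴴ (v i)‖ * ‖clm Qᴴ (b i)‖) ^ 2
        ≤ (∑ i, ‖clm Pᴴ (v i)‖ ^ 2) * ∑ i, ‖clm Qᴴ (b i)‖ ^ 2 :=
      Finset.sum_mul_sq_le_sq_mul_sq _ _ _
    have h2 : ∑ i, ‖clm Pᴴ (v i)‖ ^ 2 ≤ frobSq P := sum_sq_clm_conjTranspose_le hvo hv1 P
    have h3 : ∑ i, ‖clm Qᴴ (b i)‖ ^ 2 ≤ frobSq Q := sum_sq_clm_conjTranspose_le hbo hb1 Q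
    have hnn : (0:ℝ) ≤ ∑ i, ‖clm Pᴴ (v i)‖ * ‖clm Qᴴ (b i)‖ :=
      Finset.sum_nonneg fun i _ => mul_nonneg (norm_nonneg _) (norm_nonneg _)
    have := Real.sqrt_le_sqrt (h1.trans (mul_le_mul h2 h3
      (Finset.sum_nonneg fun i _ => sq_nonneg _) (frobSq_nonneg P)))
    rwa [Real.sqrt_sq hnn, Real.sqrt_mul (frobSq_nonneg P)] at this
  calc traceNorm X = ∑ i, σ i := traceNorm_eq_sum X
    _ ≤ ∑ i, (‖clm P₁ᴴ (w i)‖ * ‖clm Q₁ᴴ (b i)‖ + ‖clm P₂ᴴ (w i)‖ * ‖clm Q₂ᴴ (b i)‖) :=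
        Finset.sum_le_sum fun i _ => hterm i
    _ = (∑ i, ‖clm P₁ᴴ (w i)‖ * ‖clm Q₁ᴴ (b i)‖)
        + ∑ i, ‖clm P₂ᴴ (w i)‖ * ‖clm Q₂ᴴ (b i)‖ := Finset.sum_add_distrib
    _ ≤ Real.sqrt (frobSq P₁) * Real.sqrt (frobSq Q₁)
        + Real.sqrt (frobSq P₂) * Real.sqrt (frobSq Q₂) :=
        add_le_add (CS P₁ Q₁ w hworth hw1) (CS P₂ Q₂ w hworth hw1)


lemma spectralNorm_nonneg (A : Matrix n n ℂ) : 0 ≤ matrixSpectralNorm A := norm_nonneg _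

lemma norm_clm_le (A : Matrix n n ℂ) (x : EuclideanSpace ℂ n) :
    ‖clm A x‖ ≤ matrixSpectralNorm A * ‖x‖ :=
  (Matrix.toEuclideanCLM (𝕜 := ℂ) A).le_opNorm x

lemma frobSq_mul_le (C S : Matrix n n ℂ) :
    frobSq (C * S) ≤ matrixSpectralNorm C ^ 2 * frobSq S := by
  rw [frobSq_eq, frobSq_eq, Finset.mul_sum]
  refine Finset.sum_le_sum fun j _ => ?_
  rw [clm_mul]
  calc ‖clm C (clm S (EuclideanSpace.single j (1:ℂ)))‖ ^ 2
      ≤ (matrixSpectralNorm C * ‖clm S (EuclideanSpace.single j (1:ℂ))‖) ^ 2 :=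
        pow_le_pow_left₀ (norm_nonneg _) (norm_clm_le C _) 2
    _ = matrixSpectralNorm C ^ 2 * ‖clm S (EuclideanSpace.single j (1:ℂ))‖ ^ 2 := by ring

lemma sqrt_frobSq_mul_le (C S : Matrix n n ℂ) :
    Real.sqrt (frobSq (C * S)) ≤ matrixSpectralNorm C * Real.sqrt (frobSq S) := by
  calc Real.sqrt (frobSq (C * S)) ≤ Real.sqrt (matrixSpectralNorm C ^ 2 * frobSq S) :=
        Real.sqrt_le_sqrt (frobSq_mul_le C S)
    _ = matrixSpectralNorm C * Real.sqrt (frobSq S) := by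
        rw [Real.sqrt_mul (sq_nonneg _), Real.sqrt_sq (spectralNorm_nonneg C)]

open scoped MatrixOrder in
lemma frobSq_sqrt_eq_one {ρ : Matrix n n ℂ} (hρ : ρ.PosSemidef) (hρ1 : ρ.trace = 1) :
    frobSq (CFC.sqrt ρ) = 1 := by
  have hSH : ((CFC.sqrt ρ)).IsHermitian := (CFC.sqrt_nonneg ρ).posSemidef.1
  have htr : ρ.trace.re = frobSq (CFC.sqrt ρ) := by
    conv_lhs => rw [← CFC.sqrt_mul_sqrt_self ρ hρ.nonneg]
    rw [Matrix.trace, Complex.re_sum]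
    unfold frobSq
    refine Finset.sum_congr rfl fun j _ => ?_
    rw [Matrix.diag_apply, Matrix.mul_apply, Complex.re_sum]
    refine Finset.sum_congr rfl fun i _ => ?_
    rw [show (CFC.sqrt ρ) j i = star ((CFC.sqrt ρ) i j) from by rw [← hSH.apply i j, star_star]]
    rw [show (star ((CFC.sqrt ρ) i j) * (CFC.sqrt ρ) i j : ℂ)
        = ((Complex.normSq ((CFC.sqrt ρ) i j) : ℝ) : ℂ) from by
      rw [mul_comm]; exact Complex.mul_conj _]
    rw [Complex.ofReal_re, Complex.normSq_eq_norm_sq]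
  rw [← htr, hρ1]
  rfl

lemma spectralNorm_le_one {A : Matrix n n ℂ} (h : Aᴴ * A = 1) : matrixSpectralNorm A ≤ 1 := by
  rw [matrixSpectralNorm]
  refine ContinuousLinearMap.opNorm_le_bound _ zero_le_one fun x => ?_
  rw [one_mul]
  have h1 : ⟪clm A x, clm A x⟫ = ⟪x, x⟫ := by
    rw [inner_clm_self, h]
    congr 1
    show (Matrix.toEuclideanCLM (𝕜 := ℂ) (1 : Matrix n n ℂ)) x = x
    rw [_root_.map_one]
    rfl
  rw [inner_self_complex, inner_self_complex] at h1
  have h2 : ‖clm A x‖ ^ 2 = ‖x‖ ^ 2 := by exact_mod_cast h1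
  calc ‖(Matrix.toEuclideanCLM (𝕜 := ℂ) A) x‖ = Real.sqrt (‖clm A x‖ ^ 2) :=
        (Real.sqrt_sq (norm_nonneg _)).symm
    _ = Real.sqrt (‖x‖ ^ 2) := by rw [h2]
    _ ≤ ‖x‖ := le_of_eq (Real.sqrt_sq (norm_nonneg _))

section Kron

variable {m : Type*} [Fintype m] [DecidableEq m]

lemma clm_kron_apply (E : Matrix n n ℂ) (x : EuclideanSpace ℂ (n × m)) (i : n) (j : m) :
    (clm (E ⊗ₖ (1 : Matrix m m ℂ)) x) (i, j)
      = (clm E ((WithLp.equiv 2 (n → ℂ)).symm (fun k => x (k, j)))) i := by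
  rw [clm_apply, clm_apply]
  show ∑ p : n × m, (E ⊗ₖ (1 : Matrix m m ℂ)) (i, j) p * x p
      = ∑ k, E i k * x (k, j)
  rw [Fintype.sum_prod_type]
  refine Finset.sum_congr rfl fun k _ => ?_
  simp only [Matrix.kroneckerMap_apply, Matrix.one_apply, mul_ite, mul_one, mul_zero, ite_mul,
    zero_mul]
  rw [Finset.sum_ite_eq]
  simp

lemma spectralNorm_kron_one_le (E : Matrix n n ℂ) :
    matrixSpectralNorm (E ⊗ₖ (1 : Matrix m m ℂ)) ≤ matrixSpectralNorm E := by
  rw [matrixSpectralNorm]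
  refine ContinuousLinearMap.opNorm_le_bound _ (spectralNorm_nonneg E) fun x => ?_
  set y : m → EuclideanSpace ℂ n := fun j => (WithLp.equiv 2 (n → ℂ)).symm (fun k => x (k, j))
    with hy
  have hsq : ‖clm (E ⊗ₖ (1 : Matrix m m ℂ)) x‖ ^ 2 ≤ (matrixSpectralNorm E * ‖x‖) ^ 2 := by
    rw [norm_sq']
    calc ∑ p : n × m, ‖(clm (E ⊗ₖ (1 : Matrix m m ℂ)) x) p‖ ^ 2
        = ∑ j, ∑ i, ‖(clm E (y j)) i‖ ^ 2 := by
          rw [Fintype.sum_prod_type, Finset.sum_comm]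
          refine Finset.sum_congr rfl fun j _ => Finset.sum_congr rfl fun i _ => ?_
          rw [clm_kron_apply]
      _ = ∑ j, ‖clm E (y j)‖ ^ 2 := by
          refine Finset.sum_congr rfl fun j _ => (norm_sq' _).symm
      _ ≤ ∑ j, (matrixSpectralNorm E * ‖y j‖) ^ 2 :=
          Finset.sum_le_sum fun j _ => pow_le_pow_left₀ (norm_nonneg _) (norm_clm_le E _) 2
      _ = matrixSpectralNorm E ^ 2 * ∑ j, ‖y j‖ ^ 2 := by
          rw [Finset.mul_sum]; exact Finset.sum_congr rfl fun j _ => by ring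
      _ = matrixSpectralNorm E ^ 2 * ‖x‖ ^ 2 := by
          congr 1
          rw [norm_sq', Fintype.sum_prod_type, Finset.sum_comm]
          refine Finset.sum_congr rfl fun j _ => ?_
          rw [norm_sq']
          exact Finset.sum_congr rfl fun i _ => rfl
      _ = (matrixSpectralNorm E * ‖x‖) ^ 2 := by ring
  calc ‖(Matrix.toEuclideanCLM (𝕜 := ℂ) (E ⊗ₖ (1 : Matrix m m ℂ))) x‖
      = Real.sqrt (‖clm (E ⊗ₖ (1 : Matrix m m ℂ)) x‖ ^ 2) := (Real.sqrt_sq (norm_nonneg _)).symm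
    _ ≤ Real.sqrt ((matrixSpectralNorm E * ‖x‖) ^ 2) := Real.sqrt_le_sqrt hsq
    _ = matrixSpectralNorm E * ‖x‖ :=
        Real.sqrt_sq (mul_nonneg (spectralNorm_nonneg E) (norm_nonneg x))

lemma conjTranspose_kron_one (E : Matrix n n ℂ) :
    (E ⊗ₖ (1 : Matrix m m ℂ))ᴴ = Eᴴ ⊗ₖ (1 : Matrix m m ℂ) := by
  ext ⟨i, j⟩ ⟨k, l⟩
  show star ((E ⊗ₖ (1 : Matrix m m ℂ)) (k, l) (i, j)) = _
  simp only [Matrix.kroneckerMap_apply, Matrix.one_apply, Matrix.conjTranspose_apply, star_mul',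
    apply_ite, star_one, star_zero]
  by_cases h : l = j
  · subst h; simp
  · simp [h]
    intro hh
    exact absurd hh.symm h

lemma sub_kron_one (E F : Matrix n n ℂ) :
    E ⊗ₖ (1 : Matrix m m ℂ) - F ⊗ₖ (1 : Matrix m m ℂ) = (E - F) ⊗ₖ (1 : Matrix m m ℂ) := by
  ext ⟨i, j⟩ ⟨k, l⟩
  simp [Matrix.kroneckerMap_apply, sub_mul]


lemma decomp_aux (A B ρ S : Matrix n n ℂ) (hSS : S * S = ρ) (hSH : Sᴴ = S) :
    A * ρ * Aᴴ - B * ρ * Bᴴ = ((A - B) * S) * (A * S)ᴴ + (B * S) * ((A - B) * S)ᴴ := by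
  subst hSS
  simp only [Matrix.conjTranspose_mul, Matrix.conjTranspose_sub, hSH]
  noncomm_ring

end Kron

end DiamondAux

open DiamondAux MatrixOrder in
/-- For unitary `U, V`, the trace distance of the channel outputs on any state extended with an
ancilla identity is at most `2 ‖U - V‖_∞`; hence the diamond distance between the unitary
channels is at most twice the spectral norm distance. -/
theorem diamond_dist_le_two_norm {n m : Type*} [Fintype n] [DecidableEq n] [Fintype m]
    [DecidableEq m] (U V : Matrix n n ℂ)
    (hU : U ∈ Matrix.unitaryGroup n ℂ) (hV : V ∈ Matrix.unitaryGroup n ℂ)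
    (ρ : Matrix (n × m) (n × m) ℂ) (hρ : ρ.PosSemidef) (hρ1 : ρ.trace = 1) :
    traceNorm ((U ⊗ₖ (1 : Matrix m m ℂ)) * ρ * (U ⊗ₖ (1 : Matrix m m ℂ))ᴴ -
        (V ⊗ₖ (1 : Matrix m m ℂ)) * ρ * (V ⊗ₖ (1 : Matrix m m ℂ))ᴴ) ≤
      2 * matrixSpectralNorm (U - V) := by
  classical
  set A : Matrix (n × m) (n × m) ℂ := U ⊗ₖ (1 : Matrix m m ℂ) with hA
  set B : Matrix (n × m) (n × m) ℂ := V ⊗ₖ (1 : Matrix m m ℂ) with hB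
  have hSH : ((CFC.sqrt ρ))ᴴ = (CFC.sqrt ρ) := (CFC.sqrt_nonneg ρ).posSemidef.1
  have hSS : (CFC.sqrt ρ) * (CFC.sqrt ρ) = ρ := CFC.sqrt_mul_sqrt_self ρ hρ.nonneg
  have hdecomp : A * ρ * Aᴴ - B * ρ * Bᴴ
      = ((A - B) * (CFC.sqrt ρ)) * (A * (CFC.sqrt ρ))ᴴ + (B * (CFC.sqrt ρ)) * ((A - B) * (CFC.sqrt ρ))ᴴ :=
    decomp_aux A B ρ (CFC.sqrt ρ) hSS hSH
  have hmain := traceNorm_le_of_eq _ _ _ _ _ hdecomp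
  have hfS : Real.sqrt (frobSq (CFC.sqrt ρ)) = 1 := by
    rw [frobSq_sqrt_eq_one hρ hρ1, Real.sqrt_one]
  have hAB : matrixSpectralNorm (A - B) ≤ matrixSpectralNorm (U - V) := by
    rw [hA, hB, sub_kron_one]
    exact spectralNorm_kron_one_le _
  have hUU : Uᴴ * U = 1 := by
    have := (Matrix.mem_unitaryGroup_iff').mp hU
    rwa [Matrix.star_eq_conjTranspose] at this
  have hVV : Vᴴ * V = 1 := by
    have := (Matrix.mem_unitaryGroup_iff').mp hV
    rwa [Matrix.star_eq_conjTranspose] at this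
  have hA1 : matrixSpectralNorm A ≤ 1 := by
    refine spectralNorm_le_one ?_
    rw [hA, conjTranspose_kron_one, ← Matrix.mul_kronecker_mul, hUU, one_mul,
      Matrix.one_kronecker_one]
  have hB1 : matrixSpectralNorm B ≤ 1 := by
    refine spectralNorm_le_one ?_
    rw [hB, conjTranspose_kron_one, ← Matrix.mul_kronecker_mul, hVV, one_mul,
      Matrix.one_kronecker_one]
  have h1 : Real.sqrt (frobSq ((A - B) * (CFC.sqrt ρ))) ≤ matrixSpectralNorm (U - V) := by
    calc Real.sqrt (frobSq ((A - B) * (CFC.sqrt ρ)))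
        ≤ matrixSpectralNorm (A - B) * Real.sqrt (frobSq (CFC.sqrt ρ)) := sqrt_frobSq_mul_le _ _
      _ = matrixSpectralNorm (A - B) := by rw [hfS, mul_one]
      _ ≤ matrixSpectralNorm (U - V) := hAB
  have h2 : Real.sqrt (frobSq (A * (CFC.sqrt ρ))) ≤ 1 := by
    calc Real.sqrt (frobSq (A * (CFC.sqrt ρ)))
        ≤ matrixSpectralNorm A * Real.sqrt (frobSq (CFC.sqrt ρ)) := sqrt_frobSq_mul_le _ _
      _ = matrixSpectralNorm A := by rw [hfS, mul_one]
      _ ≤ 1 := hA1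
  have h3 : Real.sqrt (frobSq (B * (CFC.sqrt ρ))) ≤ 1 := by
    calc Real.sqrt (frobSq (B * (CFC.sqrt ρ)))
        ≤ matrixSpectralNorm B * Real.sqrt (frobSq (CFC.sqrt ρ)) := sqrt_frobSq_mul_le _ _
      _ = matrixSpectralNorm B := by rw [hfS, mul_one]
      _ ≤ 1 := hB1
  calc traceNorm (A * ρ * Aᴴ - B * ρ * Bᴴ)
      ≤ Real.sqrt (frobSq ((A - B) * (CFC.sqrt ρ))) * Real.sqrt (frobSq (A * (CFC.sqrt ρ)))
        + Real.sqrt (frobSq (B * (CFC.sqrt ρ))) * Real.sqrt (frobSq ((A - B) * (CFC.sqrt ρ))) := hmain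
    _ ≤ matrixSpectralNorm (U - V) * 1 + 1 * matrixSpectralNorm (U - V) :=
        add_le_add (mul_le_mul h1 h2 (Real.sqrt_nonneg _) (spectralNorm_nonneg _))
          (mul_le_mul h3 h1 (Real.sqrt_nonneg _) zero_le_one)
    _ = 2 * matrixSpectralNorm (U - V) := by ring
end

section
/- With the probabilistic partitioning 1 − p_i = min{χ/h_i, 1}, S = {i : χ/h_i < 1}, and L_A = ∑_{i∈S} Ber(p_i) the (random) number of Trotter terms among S (terms outside S are never in A), the second moment satisfies E[L_A²] ≤ |S|² − |S| ∑_{i∈S} χ/h_i. -/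
open MeasureTheory ProbabilityTheory Finset

/-- With Trotter-assignment probabilities `p i = 1 − min (χ/h i) 1` (so terms outside
`S = {i : χ/h i < 1}` are never in the Trotter partition), indicators `I i` of Trotter
assignment, and `L_A = ∑ i, I i`, the second moment satisfies
`E[L_A²] ≤ |S|² − |S| ∑_{i∈S} χ/h i`. -/
theorem second_moment_LA {Ω : Type*} [MeasureSpace Ω]
    [IsProbabilityMeasure (ℙ : Measure Ω)]
    (L : ℕ) (p h : Fin L → ℝ) (χ : ℝ) (I : Fin L → Ω → ℝ)
    (hh : ∀ i, 0 < h i) (hχ : 0 < χ)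
    (hp : ∀ i, p i = 1 - min (χ / h i) 1)
    (hmeas : ∀ i, Measurable (I i))
    (h01 : ∀ i ω, I i ω = 0 ∨ I i ω = 1)
    (hPI : ∀ i, (ℙ {ω | I i ω = 1}).toReal = p i)
    (hindep : iIndepFun I ℙ) :
    ∫ ω, (∑ i, I i ω) ^ 2 ∂ℙ ≤
      ((Finset.univ.filter (fun i => χ / h i < 1)).card : ℝ) ^ 2 -
        ((Finset.univ.filter (fun i => χ / h i < 1)).card : ℝ) *
          ∑ i ∈ Finset.univ.filter (fun i => χ / h i < 1), χ / h i := by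
  classical
  set S : Finset (Fin L) := Finset.univ.filter (fun i => χ / h i < 1) with hSdef
  set A : Fin L → Set Ω := fun i => I i ⁻¹' {1} with hAdef
  have hAmeas : ∀ i, MeasurableSet (A i) := fun i =>
    (hmeas i) (measurableSet_singleton 1)
  have hq0 : ∀ i, 0 < χ / h i := fun i => div_pos hχ (hh i)
  have hp_le1 : ∀ i, p i ≤ 1 := by
    intro i; rw [hp i]
    have : (0:ℝ) ≤ min (χ / h i) 1 := le_min (hq0 i).le zero_le_one
    linarith
  have hp_nonneg : ∀ i, 0 ≤ p i := by
    intro i; rw [hp i]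
    have : min (χ / h i) 1 ≤ 1 := min_le_right _ _
    linarith
  have hpS : ∀ i ∈ S, p i = 1 - χ / h i := by
    intro i hi
    rw [hSdef, Finset.mem_filter] at hi
    rw [hp i, min_eq_left hi.2.le]
  have hpNS : ∀ i, i ∉ S → p i = 0 := by
    intro i hi
    rw [hSdef, Finset.mem_filter] at hi
    push_neg at hi
    have h1 : (1:ℝ) ≤ χ / h i := hi (Finset.mem_univ i)
    rw [hp i, min_eq_right h1]; ring
  -- products of indicators
  have hprod : ∀ i j, (fun ω => I i ω * I j ω) =
      (A i ∩ A j).indicator (fun _ => (1:ℝ)) := by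
    intro i j
    funext ω
    rcases h01 i ω with hi | hi <;> rcases h01 j ω with hj | hj <;>
      simp [Set.indicator_apply, hAdef, Set.mem_preimage, hi, hj]
  have hint : ∀ i j, Integrable (fun ω => I i ω * I j ω) (ℙ : Measure Ω) := by
    intro i j
    rw [hprod i j]
    exact (integrable_const (1:ℝ)).indicator ((hAmeas i).inter (hAmeas j))
  have hAset : ∀ i, A i = {ω | I i ω = 1} := by
    intro i; ext ω; simp [hAdef]
  have hPA : ∀ i, (ℙ (A i)).toReal = p i := by
    intro i; rw [hAset]; exact hPI i
  -- value of each cross integral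
  have hval : ∀ i j, (∫ ω, I i ω * I j ω ∂ℙ) =
      if i = j then p i else p i * p j := by
    intro i j
    rw [hprod i j, integral_indicator_const (1:ℝ) ((hAmeas i).inter (hAmeas j)),
      smul_eq_mul, mul_one]
    by_cases hij : i = j
    · subst hij; simp [hPA i, measureReal_def]
    · have hIndep : IndepFun (I i) (I j) ℙ := hindep.indepFun hij
      have hm := hIndep.measure_inter_preimage_eq_mul {1} {1}
        (measurableSet_singleton (1:ℝ)) (measurableSet_singleton (1:ℝ))
      rw [if_neg hij]
      show (ℙ (I i ⁻¹' {1} ∩ I j ⁻¹' {1})).toReal = p i * p j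
      rw [hm, ENNReal.toReal_mul]
      exact congrArg₂ (· * ·) (hPI i) (hPI j)
  -- expand the square
  have hexpand : (∫ ω, (∑ i, I i ω) ^ 2 ∂ℙ) =
      ∑ i, ∑ j, ∫ ω, I i ω * I j ω ∂ℙ := by
    have h1 : ∀ ω, (∑ i, I i ω) ^ 2 = ∑ i, ∑ j, I i ω * I j ω := by
      intro ω; rw [sq, Finset.sum_mul_sum]
    simp only [h1]
    rw [integral_finset_sum _ (fun i _ => integrable_finset_sum _ (fun j _ => hint i j))]
    exact Finset.sum_congr rfl fun i _ =>
      integral_finset_sum _ (fun j _ => hint i j)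
  rw [hexpand]
  simp only [hval]
  -- restrict the double sum to S
  have hzero : ∀ i j : Fin L, i ∉ S ∨ j ∉ S →
      (if i = j then p i else p i * p j) = 0 := by
    intro i j hij
    by_cases hEq : i = j
    · subst hEq; rw [if_pos rfl]
      rcases hij with h' | h' <;> exact hpNS i h'
    · rw [if_neg hEq]
      rcases hij with h' | h'
      · rw [hpNS i h', zero_mul]
      · rw [hpNS j h', mul_zero]
  have hrestrict : (∑ i, ∑ j, if i = j then p i else p i * p j) =
      ∑ i ∈ S, ∑ j ∈ S, if i = j then p i else p i * p j := by
    rw [← Finset.sum_subset (Finset.subset_univ S)]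
    · refine Finset.sum_congr rfl fun i hi => ?_
      rw [← Finset.sum_subset (Finset.subset_univ S)]
      intro j _ hj
      exact hzero i j (Or.inr hj)
    · intro i _ hi
      exact Finset.sum_eq_zero fun j _ => hzero i j (Or.inl hi)
  rw [hrestrict]
  -- algebra
  set n : ℝ := (S.card : ℝ) with hn
  set t : ℝ := ∑ i ∈ S, χ / h i with ht
  set s : ℝ := ∑ i ∈ S, p i with hs
  have hsum_split : (∑ i ∈ S, ∑ j ∈ S, if i = j then p i else p i * p j) =
      s ^ 2 + ∑ i ∈ S, (p i - p i ^ 2) := by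
    have : ∀ i ∈ S, (∑ j ∈ S, if i = j then p i else p i * p j) =
        (∑ j ∈ S, p i * p j) + (p i - p i ^ 2) := by
      intro i hi
      have : (∑ j ∈ S, if i = j then p i else p i * p j) =
          ∑ j ∈ S, (p i * p j + if i = j then p i - p i ^ 2 else 0) := by
        refine Finset.sum_congr rfl fun j _ => ?_
        by_cases hEq : i = j
        · subst hEq; simp [sq]
        · simp [hEq]
      rw [this, Finset.sum_add_distrib, Finset.sum_ite_eq S i
        (fun _ => p i - p i ^ 2), if_pos hi]
    rw [Finset.sum_congr rfl this, Finset.sum_add_distrib, ← Finset.sum_mul_sum, ← sq, ← hs]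
  rw [hsum_split]
  -- key facts
  have hst : s = n - t := by
    rw [hs, Finset.sum_congr rfl hpS, Finset.sum_sub_distrib, Finset.sum_const,
      nsmul_eq_mul, mul_one, ht, hn]
  have hs_nonneg : 0 ≤ s := Finset.sum_nonneg fun i _ => hp_nonneg i
  -- goal: s^2 + ∑ (p i - p i^2) ≤ n^2 - n * t = n * s
  have hkey : s * (1 - t) ≤ ∑ i ∈ S, p i ^ 2 := by
    by_cases h1t : 1 - t ≤ 0
    · calc s * (1 - t) ≤ 0 := mul_nonpos_of_nonneg_of_nonpos hs_nonneg h1t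
        _ ≤ _ := Finset.sum_nonneg fun i _ => sq_nonneg _
    · push_neg at h1t
      rw [hs, Finset.sum_mul]
      refine Finset.sum_le_sum fun i hi => ?_
      have hti : χ / h i ≤ t := by
        rw [ht]
        exact Finset.single_le_sum (fun j _ => (hq0 j).le) hi
      have h1 : 1 - t ≤ p i := by rw [hpS i hi]; linarith
      calc p i * (1 - t) ≤ p i * p i := by
            exact mul_le_mul_of_nonneg_left h1 (hp_nonneg i)
        _ = p i ^ 2 := (sq (p i)).symm
  have hgoal : s ^ 2 + ∑ i ∈ S, (p i - p i ^ 2) ≤ n * s := by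
    rw [Finset.sum_sub_distrib, ← hs]
    have : s * (1 + s - n) ≤ ∑ i ∈ S, p i ^ 2 := by
      have : 1 + s - n = 1 - t := by rw [hst]; ring
      rw [this]; exact hkey
    nlinarith [this]
  calc s ^ 2 + ∑ i ∈ S, (p i - p i ^ 2) ≤ n * s := hgoal
    _ = n ^ 2 - n * t := by rw [hst]; ring
end

section
/- With the probabilistic partitioning 1 − p_i = min{χ/h_i, 1}, χ > 0, S = {i : χ/h_i < 1}, λ_S = ∑_{i∈S} h_i, λ_{S^C} = ∑_{i∉S} h_i, and λ_B = ∑_i h_i I_i^B with independent indicators I_i^B of QDrift assignment, the second moment satisfies E[λ_B²] ≤ χλ_S + (χ|S| + λ_{S^C})². -/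
open MeasureTheory ProbabilityTheory Finset

/-- With QDrift probabilities `1 − p i = min (χ/h i) 1`, independent QDrift indicators `I i`,
`S = {i : χ/h i < 1}`, `λ_S = ∑_{i∈S} h i`, `λ_{Sᶜ} = ∑_{i∉S} h i`, and
`λ_B = ∑ i, h i * I i`, the second moment satisfies
`E[λ_B²] ≤ χ λ_S + (χ |S| + λ_{Sᶜ})²`. -/
theorem second_moment_lambdaB_partition {Ω : Type*} [MeasureSpace Ω]
    [IsProbabilityMeasure (ℙ : Measure Ω)]
    (L : ℕ) (p h : Fin L → ℝ) (χ : ℝ) (I : Fin L → Ω → ℝ)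
    (hh : ∀ i, 0 < h i) (hχ : 0 < χ)
    (hp : ∀ i, 1 - p i = min (χ / h i) 1)
    (hmeas : ∀ i, Measurable (I i))
    (h01 : ∀ i ω, I i ω = 0 ∨ I i ω = 1)
    (hPI : ∀ i, (ℙ {ω | I i ω = 1}).toReal = 1 - p i)
    (hindep : iIndepFun I ℙ) :
    ∫ ω, (∑ i, h i * I i ω) ^ 2 ∂ℙ ≤
      χ * (∑ i ∈ Finset.univ.filter (fun i => χ / h i < 1), h i) +
        (χ * (Finset.univ.filter (fun i => χ / h i < 1)).card +
            ∑ i ∈ (Finset.univ.filter (fun i => χ / h i < 1))ᶜ, h i) ^ 2 := by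
  classical
  set S := Finset.univ.filter (fun i : Fin L => χ / h i < 1) with hSdef
  set m : Fin L → ℝ := fun i => ∫ ω, I i ω ∂ℙ with hmdef
  have hIbound : ∀ i ω, |I i ω| ≤ 1 := by
    intro i ω; rcases h01 i ω with h' | h' <;> simp [h']
  have hIint : ∀ i, Integrable (I i) ℙ := fun i =>
    (integrable_const (1:ℝ)).mono' (hmeas i).aestronglyMeasurable
      (Filter.Eventually.of_forall fun ω => by simpa using hIbound i ω)
  have hmval : ∀ i, m i = min (χ / h i) 1 := by
    intro i
    have hind : I i = Set.indicator {ω | I i ω = 1} (fun _ => (1:ℝ)) := by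
      funext ω
      rcases h01 i ω with h' | h' <;> simp [Set.indicator, h']
    have hms : MeasurableSet {ω | I i ω = 1} := (hmeas i) (measurableSet_singleton 1)
    have : m i = (ℙ {ω | I i ω = 1}).toReal := by
      rw [hmdef]
      simp only
      rw [hind, integral_indicator_const _ hms]
      simp
      rfl
    rw [this, hPI, hp]
  have hm0 : ∀ i, 0 ≤ m i := by
    intro i; rw [hmval i]
    exact le_min (div_nonneg hχ.le (hh i).le) one_pos.le
  have hmS : ∀ i ∈ S, h i * m i = χ := by
    intro i hi
    rw [hSdef, Finset.mem_filter] at hi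
    rw [hmval i, min_eq_left hi.2.le, mul_div_cancel₀ _ (hh i).ne']
  have hmSc : ∀ i ∉ S, m i = 1 := by
    intro i hi
    rw [hSdef, Finset.mem_filter] at hi
    push_neg at hi
    rw [hmval i, min_eq_right (hi (Finset.mem_univ i))]
  -- integrability of products
  have hprodint : ∀ i j : Fin L,
      Integrable (fun ω => (h i * I i ω) * (h j * I j ω)) ℙ := by
    intro i j
    refine (integrable_const (|h i| * |h j|)).mono'
      (((hmeas i).const_mul _).mul ((hmeas j).const_mul _)).aestronglyMeasurable
      (Filter.Eventually.of_forall fun ω => ?_)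
    rw [Real.norm_eq_abs, abs_mul, abs_mul, abs_mul]
    have h1 := hIbound i ω; have h2 := hIbound j ω
    calc |h i| * |I i ω| * (|h j| * |I j ω|) ≤ |h i| * 1 * (|h j| * 1) := by
          gcongr <;> positivity
      _ = |h i| * |h j| := by ring
  -- expansion of the square
  have hexp : ∫ ω, (∑ i, h i * I i ω) ^ 2 ∂ℙ =
      ∑ i, ∑ j, ∫ ω, (h i * I i ω) * (h j * I j ω) ∂ℙ := by
    have h1 : ∀ ω, (∑ i, h i * I i ω) ^ 2 =
        ∑ i, ∑ j, (h i * I i ω) * (h j * I j ω) := by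
      intro ω; rw [sq, Finset.sum_mul_sum]
    simp_rw [h1]
    rw [integral_finset_sum _ (fun i _ => integrable_finset_sum _ (fun j _ => hprodint i j))]
    exact Finset.sum_congr rfl fun i _ =>
      integral_finset_sum _ (fun j _ => hprodint i j)
  -- evaluate each term
  have hterm : ∀ i j : Fin L, ∫ ω, (h i * I i ω) * (h j * I j ω) ∂ℙ =
      if i = j then h i ^ 2 * m i else (h i * m i) * (h j * m j) := by
    intro i j
    by_cases hij : i = j
    · subst hij
      simp only [if_pos rfl]
      have : ∀ ω, (h i * I i ω) * (h i * I i ω) = h i ^ 2 * I i ω := by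
        intro ω
        rcases h01 i ω with h' | h' <;> simp [h'] <;> ring
      simp_rw [this]
      rw [integral_const_mul]
      simp [hmdef]
    · simp only [if_neg hij]
      have hind : IndepFun (I i) (I j) ℙ := hindep.indepFun hij
      have hmul : ∫ ω, I i ω * I j ω ∂ℙ = m i * m j := by
        have := hind.integral_mul_eq_mul_integral (hIint i).aestronglyMeasurable (hIint j).aestronglyMeasurable
        simpa [Pi.mul_apply] using this
      have : ∀ ω, (h i * I i ω) * (h j * I j ω) = (h i * h j) * (I i ω * I j ω) := by
        intro ω; ring
      simp_rw [this]
      rw [integral_const_mul, hmul]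
      ring
  rw [hexp]
  simp_rw [hterm]
  -- rearrange sum
  have hsum : ∑ i, ∑ j, (if i = j then h i ^ 2 * m i else (h i * m i) * (h j * m j)) =
      (∑ i, h i * m i) ^ 2 + ∑ i, (h i ^ 2 * m i - (h i * m i) ^ 2) := by
    have : ∀ i j : Fin L, (if i = j then h i ^ 2 * m i else (h i * m i) * (h j * m j)) =
        (h i * m i) * (h j * m j) + (if i = j then h i ^ 2 * m i - (h i * m i) ^ 2 else 0) := by
      intro i j
      by_cases hij : i = j
      · subst hij; simp only [if_pos rfl, eq_self_iff_true, if_true, sq]; ring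
      · simp [hij]
    simp_rw [this, Finset.sum_add_distrib, Finset.sum_ite_eq, Finset.mem_univ, if_pos,
      ← Finset.mul_sum, ← Finset.sum_mul, sq]
  rw [hsum]
  -- evaluate (∑ h i * m i)
  have hg : ∑ i, h i * m i = χ * S.card + ∑ i ∈ Sᶜ, h i := by
    rw [← Finset.sum_add_sum_compl S]
    congr 1
    · rw [Finset.sum_congr rfl hmS, Finset.sum_const, nsmul_eq_mul, mul_comm]
    · exact Finset.sum_congr rfl fun i hi => by
        rw [hmSc i (Finset.mem_compl.mp hi), mul_one]
  -- bound the variance part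
  have hvar : ∑ i, (h i ^ 2 * m i - (h i * m i) ^ 2) ≤ χ * ∑ i ∈ S, h i := by
    rw [← Finset.sum_add_sum_compl S (fun i => h i ^ 2 * m i - (h i * m i) ^ 2),
        Finset.mul_sum]
    have h2 : ∑ i ∈ Sᶜ, (h i ^ 2 * m i - (h i * m i) ^ 2) = 0 := by
      refine Finset.sum_eq_zero fun i hi => ?_
      rw [hmSc i (Finset.mem_compl.mp hi)]; ring
    rw [h2, add_zero]
    refine Finset.sum_le_sum fun i hi => ?_
    have h3 := hmS i hi
    have : h i ^ 2 * m i = h i * (h i * m i) := by ring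
    rw [this, h3]
    nlinarith [sq_nonneg χ, (hh i).le]
  rw [hg]
  linarith [hvar]
end
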